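/- arXiv:1701.07995 — 4 statements merged into one kernel-verified Lean document; each statement's English description precedes it below -/
import Mathlib

section
/- The weak order on transitive reflexive relations on [n] is a lattice, with meet of R and S given by tdd(tc(Inc(R) ∪ Inc(S)) ∪ (Dec(R) ∩ Dec(S))) and join given by tid((Inc(R) ∩ Inc(S)) ∪ tc(Dec(R) ∪ Dec(S))). -/
/-- Increasing part of an integer binary relation. -/
def IncR {n : ℕ} (R : Set (Fin n × Fin n)) : Set (Fin n × Fin n) := {p | p ∈ R ∧ p.1 ≤ p.2}

/-- Decreasing part of an integer binary relation. -/
def DecR {n : ℕ} (R : Set (Fin n × Fin n)) : Set (Fin n × Fin n) := {p | p ∈ R ∧ p.2 ≤ p.1}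

/-- Reflexivity of a relation on `Fin n`. -/
def IsReflRel {n : ℕ} (R : Set (Fin n × Fin n)) : Prop := ∀ a : Fin n, (a, a) ∈ R

/-- Transitivity. -/
def IsTransRel {n : ℕ} (R : Set (Fin n × Fin n)) : Prop :=
  ∀ u v w : Fin n, (u, v) ∈ R → (v, w) ∈ R → (u, w) ∈ R

/-- Antisymmetry. -/
def IsAntisymRel {n : ℕ} (R : Set (Fin n × Fin n)) : Prop :=
  ∀ u v : Fin n, (u, v) ∈ R → (v, u) ∈ R → u = v

/-- The weak order on integer binary relations. -/
def WOLE {n : ℕ} (R S : Set (Fin n × Fin n)) : Prop := IncR S ⊆ IncR R ∧ DecR R ⊆ DecR S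

/-- Transitive closure of a relation. -/
def tcR {n : ℕ} (R : Set (Fin n × Fin n)) : Set (Fin n × Fin n) :=
  {p | Relation.TransGen (fun u v : Fin n => (u, v) ∈ R) p.1 p.2}

/-- The transitive decreasing deletion. -/
def tddR {n : ℕ} (R : Set (Fin n × Fin n)) : Set (Fin n × Fin n) :=
  R \ {p | p.2 ≤ p.1 ∧ ∃ i j : Fin n, i ≤ p.1 ∧ p.2 ≤ j ∧
    (i, p.1) ∈ R ∧ (p.1, p.2) ∈ R ∧ (p.2, j) ∈ R ∧ (i, j) ∉ R}

/-- The transitive increasing deletion. -/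
def tidR {n : ℕ} (R : Set (Fin n × Fin n)) : Set (Fin n × Fin n) :=
  R \ {p | p.1 ≤ p.2 ∧ ∃ i j : Fin n, p.1 ≤ i ∧ j ≤ p.2 ∧
    (i, p.1) ∈ R ∧ (p.1, p.2) ∈ R ∧ (p.2, j) ∈ R ∧ (i, j) ∉ R}

/-- Meet in the weak order on transitive relations. -/
def meetT {n : ℕ} (R S : Set (Fin n × Fin n)) : Set (Fin n × Fin n) :=
  tddR (tcR (IncR R ∪ IncR S) ∪ (DecR R ∩ DecR S))

/-- Join in the weak order on transitive relations. -/
def joinT {n : ℕ} (R S : Set (Fin n × Fin n)) : Set (Fin n × Fin n) :=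
  tidR ((IncR R ∩ IncR S) ∪ tcR (DecR R ∪ DecR S))

/-!
The candidate `M = tc(Inc R ∪ Inc S) ∪ (Dec R ∩ Dec S)` is reflexive with transitive increasing
and decreasing parts. For any such `M`, a pair survives `tdd` exactly when it absorbs increasing
`M`-pairs on both sides, and composing two survivors only ever produces pairs of that kind, so
`tdd M` is transitive. A lower bound `T` of `R` and `S` contains `tc(Inc R ∪ Inc S)` and has
`Dec T ⊆ Dec R ∩ Dec S`; by transitivity of `R` and `S` an increasing step next to a decreasing
`T`-step collapses into a single step of one of the two kinds, so `tc(Inc R ∪ Inc S) ∪ Dec T` is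
transitive, and this is what protects `Dec T` from deletion. The join is the meet conjugated by
transposition, which exchanges `Inc` with `Dec` and `tdd` with `tid`, and reverses the weak order.
-/

open Relation

variable {n : ℕ}

section Basic

lemma IsTransRel.inter {R S : Set (Fin n × Fin n)} (hR : IsTransRel R) (hS : IsTransRel S) :
    IsTransRel (R ∩ S) :=
  fun _ _ _ h₁ h₂ => ⟨hR _ _ _ h₁.1 h₂.1, hS _ _ _ h₁.2 h₂.2⟩

lemma IsTransRel.decR {R : Set (Fin n × Fin n)} (hR : IsTransRel R) : IsTransRel (DecR R) :=
  fun _ _ _ h₁ h₂ => ⟨hR _ _ _ h₁.1 h₂.1, h₂.2.trans h₁.2⟩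

lemma isTransRel_tcR (A : Set (Fin n × Fin n)) : IsTransRel (tcR A) :=
  fun _ _ _ h₁ h₂ => TransGen.trans h₁ h₂

lemma tcR_subset {A T : Set (Fin n × Fin n)} (hT : IsTransRel T) (hA : A ⊆ T) : tcR A ⊆ T := by
  rintro ⟨a, b⟩ (h : TransGen _ a b)
  induction h with
  | single h => exact hA h
  | tail _ h ih => exact hT _ _ _ ih (hA h)

lemma le_of_mem_tcR_incR {R S : Set (Fin n × Fin n)} {a b : Fin n}
    (h : (a, b) ∈ tcR (IncR R ∪ IncR S)) : a ≤ b := by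
  have hle : IsTransRel {p : Fin n × Fin n | p.1 ≤ p.2} := fun _ _ _ =>
    le_trans (α := Fin n)
  exact tcR_subset hle (fun _ hp => hp.elim And.right And.right) h

end Basic

section Deletion

variable {M : Set (Fin n × Fin n)}

lemma mem_tddR_of_forall {a b : Fin n} (hab : (a, b) ∈ M)
    (H : ∀ i j, (i, a) ∈ IncR M → (b, j) ∈ IncR M → (i, j) ∈ M) : (a, b) ∈ tddR M :=
  ⟨hab, fun ⟨_, i, j, hi, hj, hia, _, hbj, hij⟩ => hij (H i j ⟨hia, hi⟩ ⟨hbj, hj⟩)⟩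

lemma mem_tddR_of_le (hI : IsTransRel (IncR M)) {a b : Fin n} (hab : (a, b) ∈ M)
    (hle : a ≤ b) : (a, b) ∈ tddR M :=
  mem_tddR_of_forall hab fun _ _ hi hj => (hI _ _ _ (hI _ _ _ hi ⟨hab, hle⟩) hj).1

lemma mem_of_mem_tddR (hI : IsTransRel (IncR M)) {x y i j : Fin n} (hxy : (x, y) ∈ tddR M)
    (hi : (i, x) ∈ IncR M) (hj : (y, j) ∈ IncR M) : (i, j) ∈ M := by
  rcases le_total x y with hle | hle
  · exact (hI _ _ _ (hI _ _ _ hi ⟨hxy.1, hle⟩) hj).1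
  · by_contra hij
    exact hxy.2 ⟨hle, i, j, hi.2, hj.2, hi.1, hxy.1, hj.1, hij⟩

lemma mem_of_mem_tddR_of_mem_tddR (hM : IsReflRel M) (hI : IsTransRel (IncR M))
    (hD : IsTransRel (DecR M)) {u v w i j : Fin n} (huv : (u, v) ∈ tddR M)
    (hvw : (v, w) ∈ tddR M) (hi : (i, u) ∈ IncR M) (hj : (w, j) ∈ IncR M) : (i, j) ∈ M := by
  have hvv : (v, v) ∈ IncR M := ⟨hM v, le_rfl⟩
  have hiv : (i, v) ∈ M := mem_of_mem_tddR hI huv hi hvv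
  have hvj : (v, j) ∈ M := mem_of_mem_tddR hI hvw hvv hj
  rcases le_total i v with h₁ | h₁
  · exact mem_of_mem_tddR hI hvw ⟨hiv, h₁⟩ hj
  rcases le_total v j with h₂ | h₂
  · exact mem_of_mem_tddR hI huv hi ⟨hvj, h₂⟩
  · exact (hD _ _ _ ⟨hiv, h₁⟩ ⟨hvj, h₂⟩).1

lemma isReflRel_tddR (hM : IsReflRel M) (hI : IsTransRel (IncR M)) : IsReflRel (tddR M) :=
  fun a => mem_tddR_of_le hI (hM a) le_rfl

lemma isTransRel_tddR (hM : IsReflRel M) (hI : IsTransRel (IncR M))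
    (hD : IsTransRel (DecR M)) : IsTransRel (tddR M) := fun u _ w huv hvw =>
  mem_tddR_of_forall
    (mem_of_mem_tddR_of_mem_tddR hM hI hD huv hvw ⟨hM u, le_rfl⟩ ⟨hM w, le_rfl⟩)
    fun _ _ hi hj => mem_of_mem_tddR_of_mem_tddR hM hI hD huv hvw hi hj

end Deletion

section Meet

variable {R S T : Set (Fin n × Fin n)}

def preMeet (R S : Set (Fin n × Fin n)) : Set (Fin n × Fin n) :=
  tcR (IncR R ∪ IncR S) ∪ (DecR R ∩ DecR S)

lemma isReflRel_preMeet (hR : IsReflRel R) (hS : IsReflRel S) : IsReflRel (preMeet R S) :=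
  fun a => Or.inr ⟨⟨hR a, le_rfl⟩, ⟨hS a, le_rfl⟩⟩

lemma incR_preMeet (hR : IsReflRel R) : IncR (preMeet R S) = tcR (IncR R ∪ IncR S) := by
  ext ⟨a, b⟩
  refine ⟨fun ⟨h, hab⟩ => h.elim id fun h => ?_, fun h => ⟨Or.inl h, le_of_mem_tcR_incR h⟩⟩
  obtain rfl : a = b := le_antisymm hab h.1.2
  exact TransGen.single (Or.inl ⟨hR a, le_rfl⟩)

lemma decR_preMeet (hR : IsReflRel R) (hS : IsReflRel S) :
    DecR (preMeet R S) = DecR R ∩ DecR S := by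
  ext ⟨a, b⟩
  refine ⟨fun ⟨h, hba⟩ => h.elim (fun h => ?_) id, fun h => ⟨Or.inr h, h.1.2⟩⟩
  obtain rfl : a = b := le_antisymm (le_of_mem_tcR_incR h) hba
  exact ⟨⟨hR a, le_rfl⟩, ⟨hS a, le_rfl⟩⟩

lemma isTransRel_incR_preMeet (hR : IsReflRel R) : IsTransRel (IncR (preMeet R S)) :=
  incR_preMeet hR ▸ isTransRel_tcR _

lemma isTransRel_decR_preMeet (hR : IsReflRel R) (htR : IsTransRel R) (hS : IsReflRel S)
    (htS : IsTransRel S) : IsTransRel (DecR (preMeet R S)) :=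
  decR_preMeet hR hS ▸ htR.decR.inter htS.decR

lemma isReflRel_meetT (hR : IsReflRel R) (hS : IsReflRel S) : IsReflRel (meetT R S) :=
  isReflRel_tddR (isReflRel_preMeet hR hS) (isTransRel_incR_preMeet hR)

lemma isTransRel_meetT (hR : IsReflRel R) (htR : IsTransRel R) (hS : IsReflRel S)
    (htS : IsTransRel S) : IsTransRel (meetT R S) :=
  isTransRel_tddR (isReflRel_preMeet hR hS) (isTransRel_incR_preMeet hR)
    (isTransRel_decR_preMeet hR htR hS htS)

lemma meetT_wole_left (hR : IsReflRel R) (hS : IsReflRel S) : WOLE (meetT R S) R := by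
  refine ⟨fun p hp => ⟨mem_tddR_of_le (isTransRel_incR_preMeet hR) ?_ hp.2, hp.2⟩,
    fun p hp => ?_⟩
  · exact Or.inl (TransGen.single (Or.inl hp))
  · have hpD : p ∈ DecR (preMeet R S) := ⟨hp.1.1, hp.2⟩
    exact (decR_preMeet hR hS ▸ hpD).1

lemma meetT_wole_right (hR : IsReflRel R) (hS : IsReflRel S) : WOLE (meetT R S) S := by
  refine ⟨fun p hp => ⟨mem_tddR_of_le (isTransRel_incR_preMeet hR) ?_ hp.2, hp.2⟩,
    fun p hp => ?_⟩
  · exact Or.inl (TransGen.single (Or.inr hp))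
  · have hpD : p ∈ DecR (preMeet R S) := ⟨hp.1.1, hp.2⟩
    exact (decR_preMeet hR hS ▸ hpD).2

lemma incR_union_subset (hTR : WOLE T R) (hTS : WOLE T S) : IncR R ∪ IncR S ⊆ T :=
  Set.union_subset (fun _ h => (hTR.1 h).1) (fun _ h => (hTS.1 h).1)

section LowerBound

variable {x y z : Fin n}

lemma mem_tcR_union_decR_of_decR_incR (htR : IsTransRel R) (htS : IsTransRel S)
    (htT : IsTransRel T) (hTR : WOLE T R) (hTS : WOLE T S) (hxy : (x, y) ∈ DecR T)
    (hyz : (y, z) ∈ IncR R ∪ IncR S) : (x, z) ∈ tcR (IncR R ∪ IncR S) ∪ DecR T := by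
  rcases le_total x z with hxz | hzx
  · refine Or.inl (TransGen.single ?_)
    rcases hyz with hyz | hyz
    · exact Or.inl ⟨htR _ _ _ (hTR.2 hxy).1 hyz.1, hxz⟩
    · exact Or.inr ⟨htS _ _ _ (hTS.2 hxy).1 hyz.1, hxz⟩
  · exact Or.inr ⟨htT _ _ _ hxy.1 (incR_union_subset hTR hTS hyz), hzx⟩

lemma mem_tcR_union_decR_of_incR_decR (htR : IsTransRel R) (htS : IsTransRel S)
    (htT : IsTransRel T) (hTR : WOLE T R) (hTS : WOLE T S) (hxy : (x, y) ∈ IncR R ∪ IncR S)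
    (hyz : (y, z) ∈ DecR T) : (x, z) ∈ tcR (IncR R ∪ IncR S) ∪ DecR T := by
  rcases le_total x z with hxz | hzx
  · refine Or.inl (TransGen.single ?_)
    rcases hxy with hxy | hxy
    · exact Or.inl ⟨htR _ _ _ hxy.1 (hTR.2 hyz).1, hxz⟩
    · exact Or.inr ⟨htS _ _ _ hxy.1 (hTS.2 hyz).1, hxz⟩
  · exact Or.inr ⟨htT _ _ _ (incR_union_subset hTR hTS hxy) hyz.1, hzx⟩

lemma mem_tcR_union_decR_of_decR_tcR (htR : IsTransRel R) (htS : IsTransRel S)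
    (htT : IsTransRel T) (hTR : WOLE T R) (hTS : WOLE T S) (hxy : (x, y) ∈ DecR T)
    (hyz : (y, z) ∈ tcR (IncR R ∪ IncR S)) : (x, z) ∈ tcR (IncR R ∪ IncR S) ∪ DecR T := by
  change TransGen _ y z at hyz
  induction hyz with
  | single h => exact mem_tcR_union_decR_of_decR_incR htR htS htT hTR hTS hxy h
  | tail _ hcd ih =>
    rcases ih with h | h
    · exact Or.inl (TransGen.tail h hcd)
    · exact mem_tcR_union_decR_of_decR_incR htR htS htT hTR hTS h hcd

lemma mem_tcR_union_decR_of_tcR_decR (htR : IsTransRel R) (htS : IsTransRel S)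
    (htT : IsTransRel T) (hTR : WOLE T R) (hTS : WOLE T S)
    (hxy : (x, y) ∈ tcR (IncR R ∪ IncR S)) (hyz : (y, z) ∈ DecR T) :
    (x, z) ∈ tcR (IncR R ∪ IncR S) ∪ DecR T := by
  change TransGen _ x y at hxy
  induction hxy using TransGen.head_induction_on with
  | single h => exact mem_tcR_union_decR_of_incR_decR htR htS htT hTR hTS h hyz
  | head hxc _ ih =>
    rcases ih with h | h
    · exact Or.inl (TransGen.head hxc h)
    · exact mem_tcR_union_decR_of_incR_decR htR htS htT hTR hTS hxc h

end LowerBound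

lemma isTransRel_tcR_union_decR (htR : IsTransRel R) (htS : IsTransRel S)
    (htT : IsTransRel T) (hTR : WOLE T R) (hTS : WOLE T S) :
    IsTransRel (tcR (IncR R ∪ IncR S) ∪ DecR T) := by
  rintro u v w (huv | huv) (hvw | hvw)
  · exact Or.inl (isTransRel_tcR _ _ _ _ huv hvw)
  · exact mem_tcR_union_decR_of_tcR_decR htR htS htT hTR hTS huv hvw
  · exact mem_tcR_union_decR_of_decR_tcR htR htS htT hTR hTS huv hvw
  · exact Or.inr (htT.decR _ _ _ huv hvw)

lemma wole_meetT (hR : IsReflRel R) (htR : IsTransRel R) (htS : IsTransRel S)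
    (htT : IsTransRel T) (hTR : WOLE T R) (hTS : WOLE T S) : WOLE T (meetT R S) := by
  have hU : tcR (IncR R ∪ IncR S) ⊆ T := tcR_subset htT (incR_union_subset hTR hTS)
  have hV : tcR (IncR R ∪ IncR S) ∪ DecR T ⊆ preMeet R S :=
    Set.union_subset_union_right _ fun _ h => ⟨hTR.2 h, hTS.2 h⟩
  refine ⟨fun p hp => ⟨hU (incR_preMeet hR ▸ ⟨hp.1.1, hp.2⟩), hp.2⟩, fun p hp => ⟨?_, hp.2⟩⟩
  obtain ⟨b, a⟩ := p
  refine mem_tddR_of_forall (M := preMeet R S) (hV (Or.inr hp)) fun i j hi hj => hV ?_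
  rw [incR_preMeet hR] at hi hj
  have hTrans := isTransRel_tcR_union_decR htR htS htT hTR hTS
  exact hTrans _ _ _ (hTrans _ _ _ (Or.inl hi) (Or.inr hp)) (Or.inl hj)

end Meet

section Transpose

variable {R S : Set (Fin n × Fin n)}

lemma IsReflRel.preimage_swap (hR : IsReflRel R) : IsReflRel (Prod.swap ⁻¹' R) := hR

lemma IsTransRel.preimage_swap (hR : IsTransRel R) : IsTransRel (Prod.swap ⁻¹' R) :=
  fun u v w h₁ h₂ => hR w v u h₂ h₁

lemma incR_preimage_swap (R : Set (Fin n × Fin n)) :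
    IncR (Prod.swap ⁻¹' R) = Prod.swap ⁻¹' DecR R := rfl

lemma decR_preimage_swap (R : Set (Fin n × Fin n)) :
    DecR (Prod.swap ⁻¹' R) = Prod.swap ⁻¹' IncR R := rfl

lemma tcR_preimage_swap (R : Set (Fin n × Fin n)) :
    tcR (Prod.swap ⁻¹' R) = Prod.swap ⁻¹' tcR R := by
  ext ⟨a, b⟩
  exact transGen_swap

lemma tddR_preimage_swap (R : Set (Fin n × Fin n)) :
    tddR (Prod.swap ⁻¹' R) = Prod.swap ⁻¹' tidR R := by
  ext ⟨a, b⟩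
  refine and_congr_right' (not_congr ⟨?_, ?_⟩) <;>
    exact fun ⟨hle, i, j, hi, hj, h₁, h₂, h₃, h₄⟩ => ⟨hle, j, i, hj, hi, h₃, h₂, h₁, h₄⟩

lemma meetT_preimage_swap (R S : Set (Fin n × Fin n)) :
    meetT (Prod.swap ⁻¹' R) (Prod.swap ⁻¹' S) = Prod.swap ⁻¹' joinT R S := by
  simp only [meetT, joinT, incR_preimage_swap, decR_preimage_swap, ← Set.preimage_union,
    ← Set.preimage_inter, tcR_preimage_swap, tddR_preimage_swap, Set.union_comm]

lemma wole_preimage_swap_iff :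
    WOLE (Prod.swap ⁻¹' R) (Prod.swap ⁻¹' S) ↔ WOLE S R := by
  simp only [WOLE, incR_preimage_swap, decR_preimage_swap,
    Prod.swap_surjective.preimage_subset_preimage_iff, and_comm]

end Transpose

section Join

variable {R S T : Set (Fin n × Fin n)}

lemma isReflRel_joinT (hR : IsReflRel R) (hS : IsReflRel S) : IsReflRel (joinT R S) := by
  have h := isReflRel_meetT hR.preimage_swap hS.preimage_swap
  rwa [meetT_preimage_swap] at h

lemma isTransRel_joinT (hR : IsReflRel R) (htR : IsTransRel R) (hS : IsReflRel S)
    (htS : IsTransRel S) : IsTransRel (joinT R S) := by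
  have h := isTransRel_meetT hR.preimage_swap htR.preimage_swap hS.preimage_swap
    htS.preimage_swap
  rw [meetT_preimage_swap] at h
  exact h.preimage_swap

lemma wole_joinT_left (hR : IsReflRel R) (hS : IsReflRel S) : WOLE R (joinT R S) := by
  have h := meetT_wole_left hR.preimage_swap hS.preimage_swap
  rwa [meetT_preimage_swap, wole_preimage_swap_iff] at h

lemma wole_joinT_right (hR : IsReflRel R) (hS : IsReflRel S) : WOLE S (joinT R S) := by
  have h := meetT_wole_right hR.preimage_swap hS.preimage_swap
  rwa [meetT_preimage_swap, wole_preimage_swap_iff] at h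

lemma joinT_wole (hR : IsReflRel R) (htR : IsTransRel R) (htS : IsTransRel S)
    (htT : IsTransRel T) (hRT : WOLE R T) (hST : WOLE S T) : WOLE (joinT R S) T := by
  have h := wole_meetT hR.preimage_swap htR.preimage_swap htS.preimage_swap
    htT.preimage_swap (wole_preimage_swap_iff.2 hRT) (wole_preimage_swap_iff.2 hST)
  rwa [meetT_preimage_swap, wole_preimage_swap_iff] at h

end Join

/-- The weak order on transitive reflexive relations is a lattice, with the
stated meet and join. -/
theorem weakOrder_transitive_lattice (n : ℕ) (R S : Set (Fin n × Fin n))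
    (hR : IsReflRel R) (htR : IsTransRel R)
    (hS : IsReflRel S) (htS : IsTransRel S) :
    (IsReflRel (meetT R S) ∧ IsTransRel (meetT R S) ∧
      WOLE (meetT R S) R ∧ WOLE (meetT R S) S ∧
      (∀ T : Set (Fin n × Fin n), IsReflRel T → IsTransRel T →
        WOLE T R → WOLE T S → WOLE T (meetT R S))) ∧
    (IsReflRel (joinT R S) ∧ IsTransRel (joinT R S) ∧
      WOLE R (joinT R S) ∧ WOLE S (joinT R S) ∧
      (∀ T : Set (Fin n × Fin n), IsReflRel T → IsTransRel T →
        WOLE R T → WOLE S T → WOLE (joinT R S) T)) :=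
  ⟨⟨isReflRel_meetT hR hS, isTransRel_meetT hR htR hS htS, meetT_wole_left hR hS,
      meetT_wole_right hR hS, fun _ _ htT => wole_meetT hR htR htS htT⟩,
    ⟨isReflRel_joinT hR hS, isTransRel_joinT hR htR hS htS, wole_joinT_left hR hS,
      wole_joinT_right hR hS, fun _ _ htT => joinT_wole hR htR htS htT⟩⟩
end

section
/- In the weak order on partial orders on [n], the posets covering a given poset R are exactly: (1) R \ {(a,b)} for a < b with a R b such that there is no i with a R i R b and i ∉ {a,b}, and (2) R ∪ {(b,a)} for a < b with a, b incomparable in R, such that there is no i ≠ a with a R i but not b R i, and no j ≠ b with j R b but not j R a. -/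
/-- A poset on [n] is a reflexive transitive antisymmetric relation. -/
def IsPosetRel {n : ℕ} (R : Set (Fin n × Fin n)) : Prop :=
  IsReflRel R ∧ IsTransRel R ∧ IsAntisymRel R

/-- Cover relations of the weak order restricted to posets. -/
def CoversPos {n : ℕ} (R S : Set (Fin n × Fin n)) : Prop :=
  WOLE R S ∧ R ≠ S ∧
    ∀ T : Set (Fin n × Fin n), IsPosetRel T → WOLE R T → WOLE T S → T = R ∨ T = S


/-! Let `R ≤ S` be a cover among posets. If `R ⊈ S`, some pair `a < b` of `R` is dropped; one that
is minimal for the pair of sets `(↑a, ↓b)` admits nothing strictly between `a` and `b`, so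
`R \ {(a, b)}` is a poset between `R` and `S`, hence equal to `S`. If `R ⊆ S`, some pair `(b, a)`
with `a < b` is added; a minimal one satisfies the two conditions of (2), which are exactly what
makes `R ∪ {(b, a)}` transitive, and again it must be `S`. Conversely, two relations differing in a
single pair admit nothing strictly between them in the weak order. -/

section

variable {n : ℕ} {R S T : Set (Fin n × Fin n)} {a b : Fin n}

namespace WOLE

lemma lt_of_mem_of_notMem (h : WOLE R S) (hR : (a, b) ∈ R) (hS : (a, b) ∉ S) : a < b :=
  lt_of_not_ge fun hba => hS (h.2 ⟨hR, hba⟩).1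

lemma lt_of_notMem_of_mem (h : WOLE R S) (hR : (b, a) ∉ R) (hS : (b, a) ∈ S) : a < b :=
  lt_of_not_ge fun hba => hR (h.1 ⟨hS, hba⟩).1

lemma diff_singleton (h : WOLE R S) (hS : (a, b) ∉ S) : WOLE (R \ {(a, b)}) S :=
  ⟨fun p hp => ⟨⟨(h.1 hp).1, by rintro rfl; exact hS hp.1⟩, hp.2⟩, fun p hp => h.2 ⟨hp.1.1, hp.2⟩⟩

lemma union_singleton (h : WOLE R S) (hS : (b, a) ∈ S) : WOLE (R ∪ {(b, a)}) S := by
  refine ⟨fun p hp => ⟨Or.inl (h.1 hp).1, hp.2⟩, ?_⟩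
  rintro p ⟨hp | rfl, hle⟩
  exacts [h.2 ⟨hp, hle⟩, ⟨hS, hle⟩]

end WOLE

lemma wole_diff_singleton (hab : a < b) : WOLE R (R \ {(a, b)}) :=
  ⟨fun _ hp => ⟨hp.1.1, hp.2⟩,
    fun p hp => ⟨⟨hp.1, by rintro rfl; exact hab.not_ge hp.2⟩, hp.2⟩⟩

lemma wole_union_singleton (hab : a < b) : WOLE R (R ∪ {(b, a)}) := by
  refine ⟨?_, fun p hp => ⟨Or.inl hp.1, hp.2⟩⟩
  rintro p ⟨hp | rfl, hle⟩
  exacts [⟨hp, hle⟩, absurd hle hab.not_ge]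

lemma mem_iff_of_wole_of_wole (hRT : WOLE R T) (hTS : WOLE T S) {q : Fin n × Fin n}
    (hq : q ∈ R ↔ q ∈ S) : q ∈ T ↔ q ∈ R := by
  rcases le_total q.1 q.2 with hle | hle
  · exact ⟨fun h => (hRT.1 ⟨h, hle⟩).1, fun h => (hTS.1 ⟨hq.1 h, hle⟩).1⟩
  · exact ⟨fun h => hq.2 (hTS.2 ⟨h, hle⟩).1, fun h => (hRT.2 ⟨h, hle⟩).1⟩

lemma coversPos_of_forall_ne (hle : WOLE R S) (hne : R ≠ S) {p : Fin n × Fin n}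
    (h : ∀ q ≠ p, q ∈ R ↔ q ∈ S) : CoversPos R S := by
  refine ⟨hle, hne, fun T _ hRT hTS => ?_⟩
  have hT : ∀ q ≠ p, q ∈ T ↔ q ∈ R := fun q hq => mem_iff_of_wole_of_wole hRT hTS (h q hq)
  have hp : ¬(p ∈ R ↔ p ∈ S) := fun hp =>
    hne (Set.ext fun q => if hq : q = p then hq ▸ hp else h q hq)
  by_cases hpT : p ∈ T ↔ p ∈ R
  · exact Or.inl (Set.ext fun q => if hq : q = p then hq ▸ hpT else hT q hq)
  · exact Or.inr (Set.ext fun q =>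
      if hq : q = p then hq ▸ by tauto else (hT q hq).trans (h q hq))

namespace IsPosetRel

lemma diff_singleton (hR : IsPosetRel R) (hab : a ≠ b)
    (hcov : ∀ i, (a, i) ∈ R → (i, b) ∈ R → i = a ∨ i = b) : IsPosetRel (R \ {(a, b)}) := by
  obtain ⟨hrefl, htrans, hanti⟩ := hR
  refine ⟨fun x => ⟨hrefl x, fun h => hab (by cases h; rfl)⟩,
    fun u v w huv hvw => ⟨htrans u v w huv.1 hvw.1, ?_⟩, fun u v huv hvu => hanti u v huv.1 hvu.1⟩
  rintro ⟨⟩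
  rcases hcov v huv.1 hvw.1 with rfl | rfl
  exacts [hvw.2 rfl, huv.2 rfl]

lemma union_singleton (hR : IsPosetRel R) (hab : (a, b) ∉ R)
    (hup : ∀ i, i ≠ a → (a, i) ∈ R → (b, i) ∈ R)
    (hdown : ∀ j, j ≠ b → (j, b) ∈ R → (j, a) ∈ R) : IsPosetRel (R ∪ {(b, a)}) := by
  obtain ⟨hrefl, htrans, hanti⟩ := hR
  simp only [IsPosetRel, IsReflRel, IsTransRel, IsAntisymRel, Set.mem_union,
    Set.mem_singleton_iff, Prod.mk.injEq]
  refine ⟨fun x => Or.inl (hrefl x), ?_, ?_⟩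
  · rintro u v w (huv | ⟨hu, hv⟩) (hvw | ⟨hv', hw⟩)
    · exact Or.inl (htrans u v w huv hvw)
    · subst v w
      by_cases hu : u = b
      · exact Or.inr ⟨hu, rfl⟩
      · exact Or.inl (hdown u hu huv)
    · subst u v
      by_cases hw : w = a
      · exact Or.inr ⟨rfl, hw⟩
      · exact Or.inl (hup w hw hvw)
    · exact Or.inr ⟨hu, hw⟩
  · rintro u v (huv | ⟨hu, hv⟩) (hvu | ⟨hv', hu'⟩)
    · exact hanti u v huv hvu
    · subst u v
      exact absurd huv hab
    · subst u v
      exact absurd hvu hab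
    · exact hu.trans hv'.symm

end IsPosetRel

def upperLowerRel (R : Set (Fin n × Fin n)) (a b : Fin n) : Set (Fin n) × Set (Fin n) :=
  ({i | (a, i) ∈ R}, {j | (j, b) ∈ R})

lemma upperLowerRel_lt_left (hR : IsPosetRel R) {i : Fin n} (hai : (a, i) ∈ R) (hia : i ≠ a) :
    upperLowerRel R i b < upperLowerRel R a b := by
  have hsub : {k | (i, k) ∈ R} ⊆ {k | (a, k) ∈ R} := fun k hk => hR.2.1 a i k hai hk
  exact Prod.mk_lt_mk_of_lt_of_le
    (hsub.ssubset_of_mem_notMem (hR.1 a) fun hia' => hia (hR.2.2 i a hia' hai)) le_rfl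

lemma upperLowerRel_lt_right (hR : IsPosetRel R) {j : Fin n} (hjb : (j, b) ∈ R) (hjb' : j ≠ b) :
    upperLowerRel R a j < upperLowerRel R a b := by
  have hsub : {k | (k, j) ∈ R} ⊆ {k | (k, b) ∈ R} := fun k hk => hR.2.1 k j b hk hjb
  exact Prod.mk_lt_mk_of_le_of_lt le_rfl
    (hsub.ssubset_of_mem_notMem (hR.1 b) fun hbj => hjb' (hR.2.2 j b hjb hbj))

lemma exists_removable_pair (hR : IsPosetRel R) (hS : IsTransRel S) (hRS : ¬R ⊆ S) :
    ∃ a b, (a, b) ∈ R ∧ (a, b) ∉ S ∧ ∀ i, (a, i) ∈ R → (i, b) ∈ R → i = a ∨ i = b := by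
  obtain ⟨⟨a, b⟩, hmin⟩ := Set.Finite.exists_minimalFor
    (fun p => upperLowerRel R p.1 p.2) (R \ S) (Set.toFinite _) (Set.nonempty_of_not_subset hRS)
  obtain ⟨habR, habS⟩ := hmin.prop
  refine ⟨a, b, habR, habS, fun i hai hib => ?_⟩
  by_contra! ⟨hia, hib'⟩
  by_cases haiS : (a, i) ∈ S
  · by_cases hibS : (i, b) ∈ S
    · exact habS (hS a i b haiS hibS)
    · exact hmin.not_lt (j := (i, b)) ⟨hib, hibS⟩ (upperLowerRel_lt_left hR hai hia)
  · exact hmin.not_lt (j := (a, i)) ⟨hai, haiS⟩ (upperLowerRel_lt_right hR hib hib')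

lemma exists_addable_pair (hR : IsPosetRel R) (hS : IsTransRel S) (hRS : R ⊆ S) (hne : R ≠ S) :
    ∃ a b, (b, a) ∈ S ∧ (b, a) ∉ R ∧
      (∀ i, i ≠ a → (a, i) ∈ R → (b, i) ∈ R) ∧ (∀ j, j ≠ b → (j, b) ∈ R → (j, a) ∈ R) := by
  obtain ⟨⟨a, b⟩, hmin⟩ := Set.Finite.exists_minimalFor
    (fun p => upperLowerRel R p.1 p.2) (Prod.swap ⁻¹' (S \ R)) (Set.toFinite _)
    (Set.nonempty_of_ssubset (hRS.ssubset_of_ne hne) |>.preimage Prod.swap_surjective)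
  obtain ⟨hbaS, hbaR⟩ := hmin.prop
  refine ⟨a, b, hbaS, hbaR, fun i hia hai => ?_, fun j hjb hjb' => ?_⟩
  · by_contra hbi
    exact hmin.not_lt (j := (i, b)) ⟨hS b a i hbaS (hRS hai), hbi⟩
      (upperLowerRel_lt_left hR hai hia)
  · by_contra hja
    exact hmin.not_lt (j := (a, j)) ⟨hS j b a (hRS hjb') hbaS, hja⟩
      (upperLowerRel_lt_right hR hjb' hjb)

end

/-- Characterization of the cover relations in the weak order on posets. -/
theorem covers_posets_characterization (n : ℕ) (R S : Set (Fin n × Fin n))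
    (hR : IsPosetRel R) (hS : IsPosetRel S) :
    CoversPos R S ↔
      ((∃ a b : Fin n, a < b ∧ (a, b) ∈ R ∧
          (∀ i : Fin n, (a, i) ∈ R → (i, b) ∈ R → i = a ∨ i = b) ∧
          S = R \ {(a, b)}) ∨
       (∃ a b : Fin n, a < b ∧ (a, b) ∉ R ∧ (b, a) ∉ R ∧
          (∀ i : Fin n, i ≠ a → (a, i) ∈ R → (b, i) ∈ R) ∧
          (∀ j : Fin n, j ≠ b → (j, b) ∈ R → (j, a) ∈ R) ∧
          S = R ∪ {(b, a)})) := by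
  constructor
  · rintro ⟨hle, hne, hmin⟩
    by_cases hRS : R ⊆ S
    · obtain ⟨a, b, hbaS, hbaR, hup, hdown⟩ := exists_addable_pair hR hS.2.1 hRS hne
      have hab := hle.lt_of_notMem_of_mem hbaR hbaS
      have habR : (a, b) ∉ R := fun h => hab.ne (hS.2.2 a b (hRS h) hbaS)
      rcases hmin _ (hR.union_singleton habR hup hdown) (wole_union_singleton hab)
        (hle.union_singleton hbaS) with hT | hT
      · exact absurd (hT ▸ Or.inr rfl) hbaR
      · exact Or.inr ⟨a, b, hab, habR, hbaR, hup, hdown, hT.symm⟩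
    · obtain ⟨a, b, habR, habS, hcov⟩ := exists_removable_pair hR hS.2.1 hRS
      have hab := hle.lt_of_mem_of_notMem habR habS
      rcases hmin _ (hR.diff_singleton hab.ne hcov) (wole_diff_singleton hab)
        (hle.diff_singleton habS) with hT | hT
      · exact absurd (hT ▸ habR) fun h => h.2 rfl
      · exact Or.inl ⟨a, b, hab, habR, hcov, hT.symm⟩
  · rintro (⟨a, b, hab, habR, -, rfl⟩ | ⟨a, b, hab, -, hbaR, -, -, rfl⟩)
    · refine coversPos_of_forall_ne (p := (a, b)) (wole_diff_singleton hab)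
        (fun h => (h ▸ habR : (a, b) ∈ R \ {(a, b)}).2 rfl) fun q hq => ?_
      simp [hq]
    · refine coversPos_of_forall_ne (p := (b, a)) (wole_union_singleton hab)
        (fun h => hbaR (h ▸ Or.inr rfl)) fun q hq => ?_
      simp [hq]
end

section
/- A partial order ≺ on [n] admits a weak order maximal linear extension if and only if for all a < b < c, a ≺ c implies a ≺ b or b ≺ c. Symmetrically, ≺ admits a weak order minimal linear extension if and only if for all a < b < c, c ≺ a implies b ≺ a or c ≺ b. -/
/-- Totality of a relation. -/
def IsTotalRel {n : ℕ} (R : Set (Fin n × Fin n)) : Prop :=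
  ∀ u v : Fin n, (u, v) ∈ R ∨ (v, u) ∈ R

/-! A weak order maximal linear extension `L` must invert every pair `b < a` that `≺` leaves
incomparable, since Szpilrajn's theorem puts `a` before `b` in some linear extension. Hence
`a ≺ c` with `a ⊀ b` and `b ⊀ c` would force `c, b, a` in this order in `L`, which is absurd.
Conversely, `≺` together with all its incomparable pairs ordered decreasingly is transitive
exactly thanks to the condition, so it is a linear extension, and it has every inversion a
linear extension can have. Reversing the indices `i ↦ n - 1 - i` reverses the weak order and
exchanges the two conditions, which turns the minimal case into the maximal one. -/

structure IsLinearExtension {n : ℕ} (R L : Set (Fin n × Fin n)) : Prop where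
  total : IsTotalRel L
  trans : IsTransRel L
  antisymm : IsAntisymRel L
  subset : R ⊆ L

def IsMaxLinearExtension {n : ℕ} (R L : Set (Fin n × Fin n)) : Prop :=
  IsLinearExtension R L ∧ ∀ L', IsLinearExtension R L' → WOLE L' L

def IsMinLinearExtension {n : ℕ} (R L : Set (Fin n × Fin n)) : Prop :=
  IsLinearExtension R L ∧ ∀ L', IsLinearExtension R L' → WOLE L L'

section

variable {n : ℕ} {R L : Set (Fin n × Fin n)}

theorem isLinearExtension_iff :
    IsLinearExtension R L ↔ IsTotalRel L ∧ IsTransRel L ∧ IsAntisymRel L ∧ R ⊆ L :=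
  ⟨fun h => ⟨h.total, h.trans, h.antisymm, h.subset⟩,
    fun ⟨h₁, h₂, h₃, h₄⟩ => ⟨h₁, h₂, h₃, h₄⟩⟩

theorem exists_isLinearExtension_mem (hrefl : IsReflRel R) (htrans : IsTransRel R)
    (hanti : IsAntisymRel R) {x y : Fin n} (hyx : (y, x) ∉ R) :
    ∃ L, IsLinearExtension R L ∧ (x, y) ∈ L := by
  -- the transitive closure of `R ∪ {(x, y)}`
  let r : Fin n → Fin n → Prop := fun u v => (u, v) ∈ R ∨ (u, x) ∈ R ∧ (y, v) ∈ R
  have hr : IsPartialOrder (Fin n) r := by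
    refine { refl := fun a => Or.inl (hrefl a), trans := ?_, antisymm := ?_ }
    · rintro u v w (huv | ⟨hux, hyv⟩) (hvw | ⟨hvx, hyw⟩)
      · exact Or.inl (htrans _ _ _ huv hvw)
      · exact Or.inr ⟨htrans _ _ _ huv hvx, hyw⟩
      · exact Or.inr ⟨hux, htrans _ _ _ hyv hvw⟩
      · exact Or.inr ⟨hux, hyw⟩
    · rintro u v (huv | ⟨hux, hyv⟩) (hvu | ⟨hvx, hyu⟩)
      · exact hanti _ _ huv hvu
      · exact absurd (htrans _ _ _ hyu (htrans _ _ _ huv hvx)) hyx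
      · exact absurd (htrans _ _ _ hyv (htrans _ _ _ hvu hux)) hyx
      · exact absurd (htrans _ _ _ hyv hvx) hyx
  obtain ⟨s, hs, hrs⟩ := extend_partialOrder r
  exact ⟨{p | s p.1 p.2}, ⟨hs.total, hs.trans, hs.antisymm, fun p hp => hrs _ _ (Or.inl hp)⟩,
    hrs _ _ (Or.inr ⟨hrefl x, hrefl y⟩)⟩

theorem IsMaxLinearExtension.mem_of_not_mem (hrefl : IsReflRel R) (htrans : IsTransRel R)
    (hanti : IsAntisymRel R) (hL : IsMaxLinearExtension R L) {u v : Fin n} (hvu : v ≤ u)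
    (hR : (v, u) ∉ R) : (u, v) ∈ L := by
  obtain ⟨L', hL', huv⟩ := exists_isLinearExtension_mem hrefl htrans hanti hR
  exact ((hL.2 L' hL').2 ⟨huv, hvu⟩).1

theorem IsMaxLinearExtension.mem_or_mem (hrefl : IsReflRel R) (htrans : IsTransRel R)
    (hanti : IsAntisymRel R) (hL : IsMaxLinearExtension R L) {a b c : Fin n} (hab : a < b)
    (hbc : b < c) (hac : (a, c) ∈ R) : (a, b) ∈ R ∨ (b, c) ∈ R := by
  by_contra! h
  have hba := hL.mem_of_not_mem hrefl htrans hanti hab.le h.1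
  have hcb := hL.mem_of_not_mem hrefl htrans hanti hbc.le h.2
  exact (hab.trans hbc).ne (hL.1.antisymm _ _ (hL.1.subset hac) (hL.1.trans _ _ _ hcb hba))

/-- A linear extension only when `R` satisfies the hypothesis `hR` of
`isTransRel_maxLinearExtension`. -/
def maxLinearExtension (R : Set (Fin n × Fin n)) : Set (Fin n × Fin n) :=
  {p | p ∈ R ∨ p.2 < p.1 ∧ (p.2, p.1) ∉ R}

theorem isTotalRel_maxLinearExtension (hrefl : IsReflRel R) :
    IsTotalRel (maxLinearExtension R) := by
  intro u v
  rcases lt_trichotomy u v with huv | rfl | hvu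
  · by_cases h : (u, v) ∈ R
    exacts [Or.inl (Or.inl h), Or.inr (Or.inr ⟨huv, h⟩)]
  · exact Or.inl (Or.inl (hrefl u))
  · by_cases h : (v, u) ∈ R
    exacts [Or.inr (Or.inl h), Or.inl (Or.inr ⟨hvu, h⟩)]

theorem isAntisymRel_maxLinearExtension (hanti : IsAntisymRel R) :
    IsAntisymRel (maxLinearExtension R) := by
  rintro u v (hR | ⟨hlt, hnR⟩) (hR' | ⟨hlt', hnR'⟩)
  · exact hanti _ _ hR hR'
  · exact absurd hR hnR'
  · exact absurd hR' hnR
  · exact absurd hlt hlt'.asymm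

theorem isTransRel_maxLinearExtension (hrefl : IsReflRel R) (htrans : IsTransRel R)
    (hR : ∀ a b c : Fin n, a < b → b < c → (a, c) ∈ R → (a, b) ∈ R ∨ (b, c) ∈ R) :
    IsTransRel (maxLinearExtension R) := by
  intro u v w huv hvw
  by_cases huw : (u, w) ∈ R
  · exact Or.inl huw
  refine Or.inr ⟨?_, fun hwu => ?_⟩
  · rcases lt_trichotomy w u with hwu | rfl | huw'
    · exact hwu
    · exact absurd (hrefl w) huw
    exfalso
    rcases huv with huv | ⟨hvu, hvu'⟩ <;> rcases hvw with hvw | ⟨hwv, hwv'⟩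
    · exact huw (htrans _ _ _ huv hvw)
    · exact (hR u w v huw' hwv huv).elim huw hwv'
    · exact (hR v u w hvu huw' hvw).elim hvu' huw
    · exact (hwv.trans hvu).not_gt huw'
  · rcases huv with huv | ⟨hvu, hvu'⟩ <;> rcases hvw with hvw | ⟨hwv, hwv'⟩
    · exact huw (htrans _ _ _ huv hvw)
    · exact hwv' (htrans _ _ _ hwu huv)
    · exact hvu' (htrans _ _ _ hvw hwu)
    · exact (hR w v u hwv hvu hwu).elim hwv' hvu'

theorem wole_maxLinearExtension (hrefl : IsReflRel R) (hL : IsLinearExtension R L) :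
    WOLE L (maxLinearExtension R) := by
  constructor
  · rintro ⟨u, v⟩ ⟨huv | ⟨hvu, -⟩, hle⟩
    · exact ⟨hL.subset huv, hle⟩
    · exact absurd hle hvu.not_ge
  · rintro ⟨u, v⟩ ⟨huv, hle : v ≤ u⟩
    refine ⟨?_, hle⟩
    obtain rfl | hvu := hle.eq_or_lt
    · exact Or.inl (hrefl v)
    · exact Or.inr ⟨hvu, fun hvu' => hvu.ne (hL.antisymm _ _ (hL.subset hvu') huv)⟩

theorem exists_isMaxLinearExtension_iff (hrefl : IsReflRel R) (htrans : IsTransRel R)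
    (hanti : IsAntisymRel R) :
    (∃ L, IsMaxLinearExtension R L) ↔
      ∀ a b c : Fin n, a < b → b < c → (a, c) ∈ R → (a, b) ∈ R ∨ (b, c) ∈ R := by
  refine ⟨fun ⟨L, hL⟩ _ _ _ => hL.mem_or_mem hrefl htrans hanti, fun hR => ?_⟩
  refine ⟨maxLinearExtension R, ⟨?_, ?_, ?_, fun p hp => Or.inl hp⟩, fun L' hL' => ?_⟩
  · exact isTotalRel_maxLinearExtension hrefl
  · exact isTransRel_maxLinearExtension hrefl htrans hR
  · exact isAntisymRel_maxLinearExtension hanti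
  · exact wole_maxLinearExtension hrefl hL'

end

section Reversal

variable {n : ℕ} {R S L : Set (Fin n × Fin n)}

def revRel (R : Set (Fin n × Fin n)) : Set (Fin n × Fin n) := Prod.map Fin.rev Fin.rev ⁻¹' R

@[simp]
theorem mem_revRel {a b : Fin n} : (a, b) ∈ revRel R ↔ (a.rev, b.rev) ∈ R := Iff.rfl

@[simp]
theorem revRel_revRel : revRel (revRel R) = R := by
  ext ⟨a, b⟩
  simp

theorem revRel_involutive : Function.Involutive (revRel (n := n)) := fun _ => revRel_revRel

theorem revRel_mono (h : R ⊆ S) : revRel R ⊆ revRel S := Set.preimage_mono h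

theorem revRel_subset_revRel_iff : revRel R ⊆ revRel S ↔ R ⊆ S :=
  ⟨fun h => by simpa only [revRel_revRel] using revRel_mono h, revRel_mono⟩

theorem incR_revRel : IncR (revRel R) = revRel (DecR R) := by
  ext ⟨a, b⟩
  simp [IncR, DecR]

theorem decR_revRel : DecR (revRel R) = revRel (IncR R) := by
  ext ⟨a, b⟩
  simp [IncR, DecR]

theorem wole_revRel_iff : WOLE (revRel L) (revRel S) ↔ WOLE S L := by
  simp only [WOLE, incR_revRel, decR_revRel, revRel_subset_revRel_iff, and_comm]

theorem IsReflRel.revRel (h : IsReflRel R) : IsReflRel (revRel R) := fun a => h a.rev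

theorem IsTransRel.revRel (h : IsTransRel R) : IsTransRel (revRel R) :=
  fun _ _ _ => h _ _ _

theorem IsAntisymRel.revRel (h : IsAntisymRel R) : IsAntisymRel (revRel R) :=
  fun _ _ huv hvu => Fin.rev_injective (h _ _ huv hvu)

theorem IsTotalRel.revRel (h : IsTotalRel R) : IsTotalRel (revRel R) := fun a b => h a.rev b.rev

theorem IsLinearExtension.revRel (h : IsLinearExtension R L) :
    IsLinearExtension (revRel R) (revRel L) :=
  ⟨h.total.revRel, h.trans.revRel, h.antisymm.revRel, revRel_mono h.subset⟩

theorem isLinearExtension_revRel_iff :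
    IsLinearExtension (revRel R) (revRel L) ↔ IsLinearExtension R L :=
  ⟨fun h => by simpa only [revRel_revRel] using h.revRel, IsLinearExtension.revRel⟩

theorem isMinLinearExtension_iff_revRel :
    IsMinLinearExtension R L ↔ IsMaxLinearExtension (revRel R) (revRel L) := by
  rw [IsMinLinearExtension, IsMaxLinearExtension, isLinearExtension_revRel_iff]
  conv_rhs => rw [revRel_involutive.surjective.forall]
  simp only [isLinearExtension_revRel_iff, wole_revRel_iff]

theorem exists_isMinLinearExtension_iff (hrefl : IsReflRel R) (htrans : IsTransRel R)
    (hanti : IsAntisymRel R) :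
    (∃ L, IsMinLinearExtension R L) ↔
      ∀ a b c : Fin n, a < b → b < c → (c, a) ∈ R → (b, a) ∈ R ∨ (c, b) ∈ R := by
  rw [revRel_involutive.surjective.exists]
  simp only [isMinLinearExtension_iff_revRel, revRel_revRel]
  rw [exists_isMaxLinearExtension_iff hrefl.revRel htrans.revRel hanti.revRel]
  constructor
  · intro h a b c hab hbc hca
    simpa [or_comm] using
      h c.rev b.rev a.rev (Fin.rev_lt_rev.2 hbc) (Fin.rev_lt_rev.2 hab) (by simpa)
  · intro h a b c hab hbc hac
    simpa [or_comm] using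
      h c.rev b.rev a.rev (Fin.rev_lt_rev.2 hbc) (Fin.rev_lt_rev.2 hab) (by simpa)

end Reversal

/-- A poset admits a weak order maximal (resp. minimal) linear extension iff for
all a < b < c, a ≺ c implies a ≺ b or b ≺ c (resp. c ≺ a implies b ≺ a or c ≺ b). -/
theorem exists_maximal_minimal_linear_extension (n : ℕ) (R : Set (Fin n × Fin n))
    (hrefl : IsReflRel R) (htrans : IsTransRel R) (hanti : IsAntisymRel R) :
    ((∃ L : Set (Fin n × Fin n), IsTotalRel L ∧ IsTransRel L ∧ IsAntisymRel L ∧ R ⊆ L ∧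
        ∀ L' : Set (Fin n × Fin n),
          IsTotalRel L' → IsTransRel L' → IsAntisymRel L' → R ⊆ L' → WOLE L' L) ↔
      (∀ a b c : Fin n, a < b → b < c → (a, c) ∈ R → (a, b) ∈ R ∨ (b, c) ∈ R)) ∧
    ((∃ L : Set (Fin n × Fin n), IsTotalRel L ∧ IsTransRel L ∧ IsAntisymRel L ∧ R ⊆ L ∧
        ∀ L' : Set (Fin n × Fin n),
          IsTotalRel L' → IsTransRel L' → IsAntisymRel L' → R ⊆ L' → WOLE L L') ↔
      (∀ a b c : Fin n, a < b → b < c → (c, a) ∈ R → (b, a) ∈ R ∨ (c, b) ∈ R)) := by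
  have hmax := exists_isMaxLinearExtension_iff hrefl htrans hanti
  have hmin := exists_isMinLinearExtension_iff hrefl htrans hanti
  simp only [IsMaxLinearExtension, IsMinLinearExtension, isLinearExtension_iff, and_assoc,
    and_imp] at hmax hmin
  exact ⟨hmax, hmin⟩
end

section
/- For any partial order ≺ on [n], the poset IWOIPid(≺) is the weak order minimal element of the set IWOIP(n) that is greater than or equal to ≺, where IWOIP(n) is the set of posets satisfying: for all a < b < c, a ≺ c implies a ≺ b or b ≺ c. -/
/-- The step relation for deletion chains: u < v and u, v not related in R. -/
def NRel {n : ℕ} (R : Set (Fin n × Fin n)) (u v : Fin n) : Prop :=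
  u < v ∧ (u, v) ∉ R

/-- The IWOIP increasing deletion: delete all (a,c) admitting an intermediate
chain a < b₁ < ... < b_k < c with a ⊀ b₁ ⊀ ... ⊀ b_k ⊀ c. -/
def IWOIPid {n : ℕ} (R : Set (Fin n × Fin n)) : Set (Fin n × Fin n) :=
  R \ {p | ∃ b : Fin n, NRel R p.1 b ∧ Relation.TransGen (NRel R) b p.2}

/-- Membership in IWOIP(n). -/
def MemIWOIP {n : ℕ} (S : Set (Fin n × Fin n)) : Prop :=
  IsReflRel S ∧ IsTransRel S ∧ IsAntisymRel S ∧
    ∀ a b c : Fin n, a < b → b < c → (a, c) ∈ S → (a, b) ∈ S ∨ (b, c) ∈ S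

/-! Write `a ⋖ c` for `Relation.TransGen (NRel R) a c`: an increasing chain `a < b₁ < ⋯ < c`
of consecutively `R`-unrelated elements. A one-step chain joins a pair outside `R`, so
`IWOIPid R` is exactly `R` minus the pairs `a ⋖ c`.

The key fact is that for transitive `R` such chains cannot be jumped over: if `a ⋖ c` and
`a < b < c`, then `a ⋖ b` or `b ⋖ c`, because the step of the chain that straddles `b` cannot
have both halves in `R`. This gives transitivity of `IWOIPid R`; the IWOIP condition comes from
concatenating chains. For minimality, a poset `S` of IWOIP(n) whose increasing pairs lie in `R` contains no pair `a ⋖ c`: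
the IWOIP condition for `S` pushes `(a, c)` along the chain until it lands on a single step,
which is outside `R`. -/

open Relation

section

variable {n : ℕ} {R S : Set (Fin n × Fin n)} {a b c : Fin n}

lemma lt_of_transGen_nrel (h : TransGen (NRel R) a b) : a < b := by
  induction h with
  | single h => exact h.1
  | tail _ h ih => exact ih.trans h.1

lemma mem_IWOIPid_iff {p : Fin n × Fin n} :
    p ∈ IWOIPid R ↔ p ∈ R ∧ ¬ TransGen (NRel R) p.1 p.2 := by
  refine and_congr_right fun hp =>
    not_congr ⟨fun ⟨b, hab, hbc⟩ => hbc.head hab, fun h => ?_⟩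
  obtain ⟨b, hab, hbc⟩ := TransGen.head'_iff.mp h
  rcases hbc.cases_head with rfl | ⟨d, hbd, hdc⟩
  · exact absurd hp hab.2
  · exact ⟨b, hab, TransGen.head' hbd hdc⟩

lemma transGen_nrel_of_notMem_IWOIPid (hab : a < b) (h : (a, b) ∉ IWOIPid R) :
    TransGen (NRel R) a b := by
  by_cases hR : (a, b) ∈ R
  · simpa [mem_IWOIPid_iff, hR] using h
  · exact .single ⟨hab, hR⟩

lemma nrel_of_mem_of_lt (hanti : IsAntisymRel R) (h : (b, a) ∈ R) (hab : a < b) : NRel R a b :=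
  ⟨hab, fun h' => hab.ne (hanti a b h' h)⟩

lemma NRel.split (htrans : IsTransRel R) (h : NRel R a c) (hab : a < b) (hbc : b < c) :
    NRel R a b ∨ NRel R b c := by
  by_contra! hn
  exact h.2 (htrans a b c (not_not.mp fun h' => hn.1 ⟨hab, h'⟩)
    (not_not.mp fun h' => hn.2 ⟨hbc, h'⟩))

lemma transGen_nrel_split (htrans : IsTransRel R) (h : TransGen (NRel R) a c) (hab : a < b)
    (hbc : b < c) : TransGen (NRel R) a b ∨ TransGen (NRel R) b c := by
  induction h generalizing b with
  | single h => exact (h.split htrans hab hbc).imp .single .single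
  | @tail d c had hdc ih =>
    rcases lt_trichotomy b d with hbd | rfl | hdb
    · exact (ih hab hbd).imp id (·.tail hdc)
    · exact .inl had
    · exact (hdc.split htrans hdb hbc).imp had.tail .single

lemma notMem_of_transGen_nrel (hInc : IncR S ⊆ IncR R)
    (hS : ∀ a b c : Fin n, a < b → b < c → (a, c) ∈ S → (a, b) ∈ S ∨ (b, c) ∈ S)
    (h : TransGen (NRel R) a c) : (a, c) ∉ S := by
  induction h using TransGen.head_induction_on with
  | single h => exact fun hS' => h.2 (hInc ⟨hS', h.1.le⟩).1
  | head hab hbc ih =>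
    intro hac
    rcases hS _ _ _ hab.1 (lt_of_transGen_nrel hbc) hac with h' | h'
    · exact hab.2 (hInc ⟨h', hab.1.le⟩).1
    · exact ih h'

lemma isReflRel_IWOIPid (hrefl : IsReflRel R) : IsReflRel (IWOIPid R) :=
  fun a => mem_IWOIPid_iff.mpr ⟨hrefl a, fun h => (lt_of_transGen_nrel h).false⟩

lemma isTransRel_IWOIPid (htrans : IsTransRel R) (hanti : IsAntisymRel R) :
    IsTransRel (IWOIPid R) := by
  intro u v w huv hvw
  rw [mem_IWOIPid_iff] at huv hvw ⊢
  refine ⟨htrans u v w huv.1 hvw.1, fun huw => ?_⟩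
  rcases lt_or_ge v u with hvu | hle
  · exact hvw.2 (huw.head (nrel_of_mem_of_lt hanti huv.1 hvu))
  rcases lt_or_ge w v with hwv | hge
  · exact huv.2 (huw.tail (nrel_of_mem_of_lt hanti hvw.1 hwv))
  rcases hle.eq_or_lt with rfl | hlt
  · exact hvw.2 huw
  rcases hge.eq_or_lt with rfl | hgt
  · exact huv.2 huw
  exact (transGen_nrel_split htrans huw hlt hgt).elim huv.2 hvw.2

lemma isAntisymRel_IWOIPid (hanti : IsAntisymRel R) : IsAntisymRel (IWOIPid R) :=
  fun u v huv hvu => hanti u v huv.1 hvu.1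

lemma IWOIPid_mem_or_mem (a b c : Fin n) (hab : a < b) (hbc : b < c) (hac : (a, c) ∈ IWOIPid R) :
    (a, b) ∈ IWOIPid R ∨ (b, c) ∈ IWOIPid R := by
  by_contra! h
  exact (mem_IWOIPid_iff.mp hac).2 ((transGen_nrel_of_notMem_IWOIPid hab h.1).trans
    (transGen_nrel_of_notMem_IWOIPid hbc h.2))

lemma WOLE_IWOIPid : WOLE R (IWOIPid R) :=
  ⟨fun _ ⟨hp, hle⟩ => ⟨hp.1, hle⟩, fun _ ⟨hp, hle⟩ =>
    ⟨mem_IWOIPid_iff.mpr ⟨hp, fun h => (lt_of_transGen_nrel h).not_ge hle⟩, hle⟩⟩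

lemma WOLE_IWOIPid_of_WOLE
    (hS : ∀ a b c : Fin n, a < b → b < c → (a, c) ∈ S → (a, b) ∈ S ∨ (b, c) ∈ S)
    (hRS : WOLE R S) : WOLE (IWOIPid R) S :=
  ⟨fun _ ⟨hp, hle⟩ => ⟨mem_IWOIPid_iff.mpr ⟨(hRS.1 ⟨hp, hle⟩).1,
      fun h => notMem_of_transGen_nrel hRS.1 hS h hp⟩, hle⟩,
    fun _ ⟨hp, hle⟩ => hRS.2 ⟨hp.1, hle⟩⟩

end

/-- IWOIPid(≺) is the weak order minimal poset of IWOIP(n) above ≺. -/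
theorem IWOIPid_minimal_above (n : ℕ) (R : Set (Fin n × Fin n))
    (hrefl : IsReflRel R) (htrans : IsTransRel R) (hanti : IsAntisymRel R) :
    MemIWOIP (IWOIPid R) ∧ WOLE R (IWOIPid R) ∧
    (∀ S : Set (Fin n × Fin n), MemIWOIP S → WOLE R S → WOLE (IWOIPid R) S) :=
  ⟨⟨isReflRel_IWOIPid hrefl, isTransRel_IWOIPid htrans hanti, isAntisymRel_IWOIPid hanti,
      IWOIPid_mem_or_mem⟩,
    WOLE_IWOIPid, fun _ hS hRS => WOLE_IWOIPid_of_WOLE hS.2.2.2 hRS⟩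
end
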